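/- arXiv:2308.12708 — 3 statements merged into one kernel-verified Lean document; each statement's English description precedes it below -/
import Mathlib

section
/- Let a, b, d, y be positive integers with gcd(a, b·d) = 1, a² + d·b² = 2·y, y odd, and y > 1. Then the complex number (a + b·√d·i)/(a − b·√d·i) is not a root of unity. -/
/-- integer coordinates of (a + b√d i)^n -/
def XZaux (a b d : ℕ) : ℕ → ℤ × ℤ
  | 0 => (1, 0)
  | n + 1 => ((a : ℤ) * (XZaux a b d n).1 - (d : ℤ) * b * (XZaux a b d n).2,
              (a : ℤ) * (XZaux a b d n).2 + (b : ℤ) * (XZaux a b d n).1)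

lemma XZ_pow (a b d : ℕ) (n : ℕ) :
    ((a : ℂ) + (b : ℂ) * (Real.sqrt d : ℂ) * Complex.I) ^ n =
      ((XZaux a b d n).1 : ℂ) + ((XZaux a b d n).2 : ℂ) * (Real.sqrt d : ℂ) * Complex.I := by
  induction n with
  | zero => simp [XZaux]
  | succ n ih =>
    have hs : (Real.sqrt d : ℂ) * (Real.sqrt d : ℂ) = (d : ℂ) := by
      norm_cast
      exact Real.mul_self_sqrt (Nat.cast_nonneg d)
    rw [pow_succ, ih, XZaux]
    push_cast
    linear_combination ((b : ℂ) * (XZaux a b d n).2 * (Real.sqrt d : ℂ) ^ 2) * Complex.I_sq -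
      ((b : ℂ) * (XZaux a b d n).2) * hs

lemma XZ_pow' (a b d : ℕ) (n : ℕ) :
    ((a : ℂ) - (b : ℂ) * (Real.sqrt d : ℂ) * Complex.I) ^ n =
      ((XZaux a b d n).1 : ℂ) - ((XZaux a b d n).2 : ℂ) * (Real.sqrt d : ℂ) * Complex.I := by
  induction n with
  | zero => simp [XZaux]
  | succ n ih =>
    have hs : (Real.sqrt d : ℂ) * (Real.sqrt d : ℂ) = (d : ℂ) := by
      norm_cast
      exact Real.mul_self_sqrt (Nat.cast_nonneg d)
    rw [pow_succ, ih, XZaux]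
    push_cast
    linear_combination ((b : ℂ) * (XZaux a b d n).2 * (Real.sqrt d : ℂ) ^ 2) * Complex.I_sq -
      ((b : ℂ) * (XZaux a b d n).2) * hs

lemma XZ_norm (a b d : ℕ) (n : ℕ) :
    (XZaux a b d n).1 ^ 2 + (d : ℤ) * (XZaux a b d n).2 ^ 2 =
      ((a : ℤ) ^ 2 + (d : ℤ) * (b : ℤ) ^ 2) ^ n := by
  induction n with
  | zero => simp [XZaux]
  | succ n ih =>
    conv_rhs => rw [pow_succ, ← ih]
    rw [XZaux]
    ring

lemma XZ_mod (a b d p : ℕ) (e : ZMod p) (heb : e * (b : ZMod p) = (a : ZMod p))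
    (he2 : e ^ 2 = -(d : ZMod p)) (n : ℕ) :
    ((XZaux a b d n).1 : ZMod p) + e * ((XZaux a b d n).2 : ZMod p) = (2 * (a : ZMod p)) ^ n := by
  induction n with
  | zero => simp [XZaux]
  | succ n ih =>
    conv_rhs => rw [pow_succ, ← ih]
    rw [XZaux]
    push_cast
    linear_combination (((XZaux a b d n).1 : ZMod p) + e * ((XZaux a b d n).2 : ZMod p)) * heb -
      ((b : ZMod p) * ((XZaux a b d n).2 : ZMod p)) * he2

theorem alpha_div_conj_not_root_of_unity
    (a b d y : ℕ) (ha : 0 < a) (hb : 0 < b) (hd : 0 < d) (hy1 : 1 < y)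
    (hcop : Nat.gcd a (b * d) = 1) (heq : a ^ 2 + d * b ^ 2 = 2 * y) (hyo : Odd y) :
    ¬ ∃ k : ℕ, 0 < k ∧
      ((((a : ℂ) + (b : ℂ) * (Real.sqrt d : ℂ) * Complex.I) /
        ((a : ℂ) - (b : ℂ) * (Real.sqrt d : ℂ) * Complex.I)) ^ k = 1) := by
  rintro ⟨k, hk, hζ⟩
  set x := (XZaux a b d k).1 with hxdef
  set z := (XZaux a b d k).2 with hzdef
  -- denominator nonzero
  have hsd : (0 : ℝ) < Real.sqrt d := Real.sqrt_pos.mpr (by exact_mod_cast hd)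
  have hden : ((a : ℂ) - (b : ℂ) * (Real.sqrt d : ℂ) * Complex.I) ≠ 0 := by
    intro h
    have h2 := congrArg Complex.re h
    simp [Complex.sub_re, Complex.mul_re, Complex.I_re, Complex.I_im] at h2
    have : (0 : ℝ) < (a : ℝ) := by exact_mod_cast ha
    linarith
  -- α^k = ᾱ^k
  have hpow : ((a : ℂ) + (b : ℂ) * (Real.sqrt d : ℂ) * Complex.I) ^ k =
      ((a : ℂ) - (b : ℂ) * (Real.sqrt d : ℂ) * Complex.I) ^ k := by
    rw [div_pow, div_eq_one_iff_eq (pow_ne_zero _ hden)] at hζ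
    exact hζ
  rw [XZ_pow, XZ_pow'] at hpow
  -- imaginary part gives z = 0
  have hz0 : z = 0 := by
    have him := congrArg Complex.im hpow
    simp [Complex.add_im, Complex.sub_im, Complex.mul_im, Complex.I_re, Complex.I_im] at him
    have hzr : (z : ℝ) * Real.sqrt d = 0 := by linarith
    rcases mul_eq_zero.mp hzr with h | h
    · exact_mod_cast h
    · exact absurd h hsd.ne'
  -- norm identity: x^2 = (2y)^k
  have hnorm : x ^ 2 = (2 * (y : ℤ)) ^ k := by
    have hn := XZ_norm a b d k
    rw [← hxdef, ← hzdef, hz0] at hn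
    have hcast : ((a : ℤ) ^ 2 + (d : ℤ) * (b : ℤ) ^ 2) = 2 * (y : ℤ) := by exact_mod_cast heq
    rw [hcast] at hn
    simpa using hn
  -- odd prime p dividing y
  set p := y.minFac with hpdef
  have pp : p.Prime := Nat.minFac_prime (by omega)
  have hpy : p ∣ y := Nat.minFac_dvd y
  have hp2 : p ≠ 2 := by
    intro h
    rw [h] at hpy
    exact (Nat.not_even_iff_odd.mpr hyo) (even_iff_two_dvd.mpr hpy)
  haveI : Fact p.Prime := ⟨pp⟩
  have h2y : p ∣ 2 * y := Dvd.dvd.mul_left hpy 2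
  -- p does not divide a, b
  have hpa : ¬ p ∣ a := by
    intro hdvd
    have hdb : p ∣ d * b ^ 2 :=
      (Nat.dvd_add_right (hdvd.pow (two_ne_zero))).mp (heq ▸ h2y)
    have hbd : p ∣ b * d := by
      rcases pp.dvd_mul.mp hdb with h | h
      · exact Dvd.dvd.mul_left h b
      · exact Dvd.dvd.mul_right (pp.dvd_of_dvd_pow h) d
    have : p ∣ 1 := hcop ▸ Nat.dvd_gcd hdvd hbd
    exact Nat.Prime.one_lt pp |>.ne' (Nat.dvd_one.mp this)
  have hpb : ¬ p ∣ b := by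
    intro hdvd
    apply hpa
    have hdb : p ∣ d * b ^ 2 := Dvd.dvd.mul_left (hdvd.pow two_ne_zero) d
    have ha2 : p ∣ a ^ 2 := (Nat.dvd_add_iff_left hdb).mpr (heq ▸ h2y)
    exact pp.dvd_of_dvd_pow ha2
  -- pass to ZMod p
  have hy0 : (y : ZMod p) = 0 := (ZMod.natCast_eq_zero_iff _ _).mpr hpy
  have ha0 : (a : ZMod p) ≠ 0 := fun h => hpa ((ZMod.natCast_eq_zero_iff _ _).mp h)
  have hb0 : (b : ZMod p) ≠ 0 := fun h => hpb ((ZMod.natCast_eq_zero_iff _ _).mp h)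
  have h20 : (2 : ZMod p) ≠ 0 := by
    intro h
    have hpd2 : p ∣ 2 := (ZMod.natCast_eq_zero_iff 2 p).mp (by exact_mod_cast h)
    exact hp2 ((Nat.prime_dvd_prime_iff_eq pp Nat.prime_two).mp hpd2)
  set e : ZMod p := (a : ZMod p) * (b : ZMod p)⁻¹ with hedef
  have heb : e * (b : ZMod p) = (a : ZMod p) := by
    rw [hedef, mul_assoc, inv_mul_cancel₀ hb0, mul_one]
  have hsum : (a : ZMod p) ^ 2 + (d : ZMod p) * (b : ZMod p) ^ 2 = 0 := by
    have : ((a ^ 2 + d * b ^ 2 : ℕ) : ZMod p) = ((2 * y : ℕ) : ZMod p) := by rw [heq]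
    push_cast at this
    rw [this, hy0, mul_zero]
  have he2 : e ^ 2 = -(d : ZMod p) := by
    rw [hedef]
    field_simp
    linear_combination hsum
  -- conclude
  have hu := XZ_mod a b d p e heb he2 k
  rw [← hxdef, ← hzdef, hz0] at hu
  simp only [Int.cast_zero, mul_zero, add_zero] at hu
  have hx0 : ((x : ZMod p)) = 0 := by
    have hsq : ((x : ZMod p)) ^ 2 = 0 := by
      have hc := congrArg (fun t : ℤ => (t : ZMod p)) hnorm
      push_cast at hc
      rw [hy0, mul_zero, zero_pow hk.ne'] at hc
      exact hc
    exact pow_eq_zero_iff two_ne_zero |>.mp hsq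
  rw [hx0] at hu
  have h2a : (2 * (a : ZMod p)) = 0 := (pow_eq_zero_iff hk.ne').mp hu.symm
  rcases mul_eq_zero.mp h2a with h | h
  · exact h20 h
  · exact ha0 h
end

section
/- Let p > 3 and q be distinct primes, let a be a positive integer with gcd(a, p) = 1, let m₂ ≥ 1 and s ≥ 0 be integers, let t ≥ 1 be an integer, and let ε ∈ {1, −1}. If 2^((p−1)/2) · p^s · q^t = ε · Σ_{j=0}^{(p−1)/2} C(p, 2j+1) · a^(p−1−2j) · p^(2·j·m₂) · (−1)^j, then s = 1 and q^t ≡ 1 (mod p) or q^t ≡ −1 (mod p). -/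
/-!
Only the `j = 0` term of the sum escapes divisibility by `p²`, so the right-hand side is
`± p · a^(p-1)` modulo `p²`; as `p ∤ 2q` and `p ∤ a`, comparing `p`-adic valuations forces `s = 1`.
Cancelling `p` and applying Fermat gives `ε · 2^((p-1)/2) · q^t ≡ 1 (mod p)`, and Euler's
criterion `2^((p-1)/2) ≡ ±1 (mod p)` then leaves `q^t ≡ ±1 (mod p)`.
-/

open Finset

theorem sum_choose_odd_mul_pow_modEq (p a n m : ℕ) (hm : 1 ≤ m) :
    ∑ j ∈ range (n + 1), (p.choose (2 * j + 1) : ℤ) * (a : ℤ) ^ (p - 1 - 2 * j) *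
      (p : ℤ) ^ (2 * j * m) * (-1) ^ j ≡ p * a ^ (p - 1) [ZMOD p ^ 2] := by
  have htail : ∀ j ∈ range n, (p : ℤ) ^ 2 ∣ (p.choose (2 * (j + 1) + 1) : ℤ) *
      (a : ℤ) ^ (p - 1 - 2 * (j + 1)) * (p : ℤ) ^ (2 * (j + 1) * m) * (-1) ^ (j + 1) :=
    fun j _ => ((pow_dvd_pow _ (by nlinarith)).mul_left _).mul_right _
  rw [sum_range_succ']
  simpa using (Int.modEq_zero_iff_dvd.mpr (dvd_sum htail)).add_right (p * a ^ (p - 1) : ℤ)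

theorem Int.eq_one_of_mul_pow_modEq {p u b : ℤ} {s : ℕ} (hp : p ≠ 0) (hu : ¬ p ∣ u)
    (hb : ¬ p ∣ b) (h : u * p ^ s ≡ p * b [ZMOD p ^ 2]) : s = 1 := by
  obtain _ | _ | s := s
  · have : p ∣ p * b - u := by simpa using (Int.ModEq.of_mul_right p (by simpa [sq] using h)).dvd
    exact absurd ((dvd_sub_right (dvd_mul_right p b)).mp this) hu
  · rfl
  · have hpb : p * b ≡ 0 [ZMOD p ^ 2] :=
      h.symm.trans (Int.modEq_zero_iff_dvd.mpr ((pow_dvd_pow p (by omega)).mul_left u))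
    rw [Int.modEq_zero_iff_dvd, sq, mul_dvd_mul_iff_left hp] at hpb
    exact absurd hpb hb

theorem Int.modEq_one_or_neg_one_of_pow_div_two_mul {p : ℕ} [Fact p.Prime] {c x ε : ℤ}
    (hc : ¬ (p : ℤ) ∣ c) (hε : ε = 1 ∨ ε = -1) (h : ε * (c ^ (p / 2) * x) ≡ 1 [ZMOD p]) :
    x ≡ 1 [ZMOD p] ∨ x ≡ -1 [ZMOD p] := by
  simp only [← ZMod.intCast_eq_intCast_iff] at h ⊢
  push_cast at h ⊢
  have hc' : (c : ZMod p) ≠ 0 := mt (ZMod.intCast_zmod_eq_zero_iff_dvd c p).mp hc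
  rcases hε with rfl | rfl <;> rcases ZMod.pow_div_two_eq_neg_one_or_one p hc' with hu | hu <;>
    simp only [hu, Int.cast_one, Int.cast_neg] at h
  exacts [.inl (by linear_combination h), .inr (by linear_combination -h),
    .inr (by linear_combination -h), .inl (by linear_combination h)]

theorem descent_d_eq_one_general
    (p q : ℕ) (hp : p.Prime) (hq : q.Prime) (hp3 : 3 < p) (hpq : p ≠ q)
    (a : ℕ) (hap : Nat.gcd a p = 1)
    (m₂ s t : ℕ) (hm₂ : 1 ≤ m₂)
    (ε : ℤ) (hε : ε = 1 ∨ ε = -1)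
    (heq : (2 : ℤ) ^ ((p - 1) / 2) * (p : ℤ) ^ s * (q : ℤ) ^ t =
      ε * ∑ j ∈ Finset.range ((p - 1) / 2 + 1),
        (p.choose (2 * j + 1) : ℤ) * (a : ℤ) ^ (p - 1 - 2 * j) *
          (p : ℤ) ^ (2 * j * m₂) * (-1) ^ j) :
    s = 1 ∧ ((q : ℤ) ^ t ≡ 1 [ZMOD p] ∨ (q : ℤ) ^ t ≡ -1 [ZMOD p]) := by
  have : Fact p.Prime := ⟨hp⟩
  set S := ∑ j ∈ Finset.range ((p - 1) / 2 + 1), (p.choose (2 * j + 1) : ℤ) *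
    (a : ℤ) ^ (p - 1 - 2 * j) * (p : ℤ) ^ (2 * j * m₂) * (-1) ^ j
  have hpZ : Prime (p : ℤ) := Nat.prime_iff_prime_int.mp hp
  have hε2 : ε * ε = 1 := by rcases hε with rfl | rfl <;> norm_num
  have hfermat : (a : ℤ) ^ (p - 1) ≡ 1 [ZMOD p] :=
    Int.ModEq.pow_card_sub_one_eq_one hp (Nat.isCoprime_iff_coprime.mpr hap)
  have h2 : ¬ (p : ℤ) ∣ 2 := fun h => by have := Int.le_of_dvd two_pos h; omega
  have hu : ¬ (p : ℤ) ∣ ε * (2 ^ ((p - 1) / 2) * q ^ t) := by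
    rw [(Int.isUnit_iff.mpr hε).dvd_mul_left, hpZ.dvd_mul, not_or]
    refine ⟨mt hpZ.dvd_of_dvd_pow h2, fun h => hpq ?_⟩
    exact (Nat.prime_dvd_prime_iff_eq hp hq).mp (Int.natCast_dvd_natCast.mp (hpZ.dvd_of_dvd_pow h))
  have hb : ¬ (p : ℤ) ∣ a ^ (p - 1) := fun h =>
    hpZ.not_dvd_one (by simpa using ((Int.modEq_zero_iff_dvd.mpr h).symm.trans hfermat).dvd)
  have hmod : ε * (2 ^ ((p - 1) / 2) * q ^ t) * p ^ s ≡ p * a ^ (p - 1) [ZMOD p ^ 2] := by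
    convert sum_choose_odd_mul_pow_modEq p a ((p - 1) / 2) m₂ hm₂ using 1
    linear_combination ε * heq + S * hε2
  obtain rfl := Int.eq_one_of_mul_pow_modEq hpZ.ne_zero hu hb hmod
  have hcancel : ε * (2 ^ ((p - 1) / 2) * q ^ t) ≡ a ^ (p - 1) [ZMOD p] :=
    Int.ModEq.mul_left_cancel' hpZ.ne_zero (by simpa only [pow_one, sq, mul_comm] using hmod)
  have hhalf : (p - 1) / 2 = p / 2 := by
    have := Nat.odd_iff.mp (hp.odd_of_ne_two (by omega)); omega
  rw [hhalf] at hcancel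
  exact ⟨rfl, Int.modEq_one_or_neg_one_of_pow_div_two_mul h2 hε (hcancel.trans hfermat)⟩

theorem descent_d_eq_one
    (p q : ℕ) (hp : p.Prime) (hq : q.Prime) (hp3 : 3 < p) (hpq : p ≠ q)
    (a : ℕ) (ha : 0 < a) (hap : Nat.gcd a p = 1)
    (m₂ s t : ℕ) (hm₂ : 1 ≤ m₂) (ht : 1 ≤ t)
    (ε : ℤ) (hε : ε = 1 ∨ ε = -1)
    (heq : (2 : ℤ) ^ ((p - 1) / 2) * (p : ℤ) ^ s * (q : ℤ) ^ t =
      ε * ∑ j ∈ Finset.range ((p - 1) / 2 + 1),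
        (p.choose (2 * j + 1) : ℤ) * (a : ℤ) ^ (p - 1 - 2 * j) *
          (p : ℤ) ^ (2 * j * m₂) * (-1) ^ j) :
    s = 1 ∧ ((q : ℤ) ^ t ≡ 1 [ZMOD p] ∨ (q : ℤ) ^ t ≡ -1 [ZMOD p]) :=
  descent_d_eq_one_general p q hp hq hp3 hpq a hap m₂ s t hm₂ ε hε heq
end

section
/- Let p > 3 and q be distinct primes, let a be a positive integer with gcd(a, p) = 1, let m₂ ≥ 0 and s ≥ 0 be integers, let t ≥ 1 be an integer, and let ε ∈ {1, −1}. If 2^((p−1)/2) · p^s · q^t = ε · Σ_{j=0}^{(p−1)/2} C(p, 2j+1) · a^(p−1−2j) · p^(2·j·m₂) · (−p)^j, then s = 1 and q^t ≡ 1 (mod p) or q^t ≡ −1 (mod p). -/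
/-!
Every term of the sum with `j ≥ 1` is divisible by `p²` (for `j = 1` because `p ∣ C(p, 3)` when
`p > 3`), so the sum is `p · B` with `B ≡ a^(p-1) ≡ 1 (mod p)`. Since `p ∤ 2^((p-1)/2) q^t`,
comparing `p`-adic valuations gives `s = 1`; cancelling `p` and reducing mod `p`, Euler's
criterion `2^((p-1)/2) ≡ ±1` leaves `q^t ≡ ±1`.
-/

open Finset

lemma sq_dvd_choose_mul_neg_pow {p : ℕ} (hp : p.Prime) (hp3 : 3 < p) (a m i : ℕ) :
    (p : ℤ) ^ 2 ∣ (p.choose (2 * (i + 1) + 1) : ℤ) * (a : ℤ) ^ (p - 1 - 2 * (i + 1)) *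
      (p : ℤ) ^ (2 * (i + 1) * m) * (-(p : ℤ)) ^ (i + 1) := by
  rcases i with _ | i
  · obtain ⟨c, hc⟩ : (p : ℤ) ∣ (p.choose 3 : ℤ) :=
      Int.natCast_dvd_natCast.mpr (hp.dvd_choose_self (by norm_num) (by omega))
    rw [hc]
    exact ⟨-(c * (a : ℤ) ^ (p - 1 - 2 * (0 + 1)) * (p : ℤ) ^ (2 * (0 + 1) * m)), by ring⟩
  · refine Dvd.dvd.mul_left ?_ _
    rw [show i + 1 + 1 = 2 + i by ring, pow_add, neg_sq]
    exact dvd_mul_right _ _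

lemma exists_sum_choose_odd_eq {p : ℕ} (hp : p.Prime) (hp3 : 3 < p) (a m N : ℕ) :
    ∃ R : ℤ, ∑ j ∈ range (N + 1),
        (p.choose (2 * j + 1) : ℤ) * (a : ℤ) ^ (p - 1 - 2 * j) *
          (p : ℤ) ^ (2 * j * m) * (-(p : ℤ)) ^ j = p * a ^ (p - 1) + p ^ 2 * R := by
  obtain ⟨R, hR⟩ := dvd_sum fun i (_ : i ∈ range N) => sq_dvd_choose_mul_neg_pow hp hp3 a m i
  refine ⟨R, ?_⟩
  rw [sum_range_succ', hR]
  simp [add_comm]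

lemma eq_one_of_pow_mul_eq_mul {M : Type*} [CommMonoidWithZero M] [IsLeftCancelMulZero M]
    {p c b : M} (hp : Prime p) (hc : ¬ p ∣ c) (hb : ¬ p ∣ b) {s : ℕ} (h : p ^ s * c = p * b) : s = 1 := by
  rcases s with _ | _ | s
  · exact absurd (h ▸ dvd_mul_right p b) (by simpa using hc)
  · rfl
  · refine absurd ⟨p ^ s * c, ?_⟩ hb
    refine mul_left_cancel₀ hp.ne_zero ?_
    rw [← h, pow_succ', pow_succ', mul_assoc, mul_assoc]

lemma eq_one_or_eq_neg_one_of_mul_eq {R : Type*} [Ring R] {u v y : R}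
    (hu : u = 1 ∨ u = -1) (hv : v = 1 ∨ v = -1) (h : u * y = v) : y = 1 ∨ y = -1 := by
  rcases hu with rfl | rfl <;> rcases hv with rfl | rfl <;> simp_all [neg_eq_iff_eq_neg]

lemma not_dvd_two_pow_mul_pow {p q : ℕ} (hp : p.Prime) (hq : q.Prime) (hp2 : p ≠ 2) (hpq : p ≠ q)
    (n t : ℕ) : ¬ (p : ℤ) ∣ 2 ^ n * q ^ t := by
  intro h
  have h : p ∣ 2 ^ n * q ^ t := by exact_mod_cast h
  rcases hp.dvd_mul.mp h with h | h
  · exact hp2 ((Nat.prime_dvd_prime_iff_eq hp Nat.prime_two).mp (hp.dvd_of_dvd_pow h))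
  · exact hpq ((Nat.prime_dvd_prime_iff_eq hp hq).mp (hp.dvd_of_dvd_pow h))

lemma modEq_one_or_neg_one_of_two_pow_mul_eq {p : ℕ} [Fact p.Prime] (hp2 : p ≠ 2) {x ε b : ℤ}
    (hε : ε = 1 ∨ ε = -1) (hb : b ≡ 1 [ZMOD p]) (h : 2 ^ ((p - 1) / 2) * x = ε * b) :
    x ≡ 1 [ZMOD p] ∨ x ≡ -1 [ZMOD p] := by
  have h20 : (2 : ZMod p) ≠ 0 := by
    exact_mod_cast (ZMod.natCast_eq_zero_iff 2 p).not.mpr fun h2 =>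
      hp2 ((Nat.prime_dvd_prime_iff_eq Fact.out Nat.prime_two).mp h2)
  have hhalf : (p - 1) / 2 = p / 2 := by
    obtain ⟨k, rfl⟩ := (Fact.out : p.Prime).odd_of_ne_two hp2
    omega
  have hb' : (b : ZMod p) = 1 := by exact_mod_cast (ZMod.intCast_eq_intCast_iff _ _ _).mpr hb
  have hmod : (2 : ZMod p) ^ (p / 2) * x = ε := by
    simpa [hb', hhalf] using congrArg (Int.cast : ℤ → ZMod p) h
  simp only [← ZMod.intCast_eq_intCast_iff]
  push_cast
  exact eq_one_or_eq_neg_one_of_mul_eq (ZMod.pow_div_two_eq_neg_one_or_one p h20)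
    (by rcases hε with rfl | rfl <;> simp) hmod

theorem descent_d_eq_p_general
    (p q : ℕ) (hp : p.Prime) (hq : q.Prime) (hp3 : 3 < p) (hpq : p ≠ q)
    (a : ℕ) (hap : Nat.gcd a p = 1)
    (m₂ s t : ℕ)
    (ε : ℤ) (hε : ε = 1 ∨ ε = -1)
    (heq : (2 : ℤ) ^ ((p - 1) / 2) * (p : ℤ) ^ s * (q : ℤ) ^ t =
      ε * ∑ j ∈ Finset.range ((p - 1) / 2 + 1),
        (p.choose (2 * j + 1) : ℤ) * (a : ℤ) ^ (p - 1 - 2 * j) *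
          (p : ℤ) ^ (2 * j * m₂) * (-(p : ℤ)) ^ j) :
    s = 1 ∧ ((q : ℤ) ^ t ≡ 1 [ZMOD p] ∨ (q : ℤ) ^ t ≡ -1 [ZMOD p]) := by
  have : Fact p.Prime := ⟨hp⟩
  have hp2 : p ≠ 2 := by omega
  have hpZ : Prime (p : ℤ) := Nat.prime_iff_prime_int.mp hp
  obtain ⟨R, hR⟩ := exists_sum_choose_odd_eq hp hp3 a m₂ ((p - 1) / 2)
  have hB : (a : ℤ) ^ (p - 1) + p * R ≡ 1 [ZMOD p] :=
    Int.modEq_add_fac_self.trans <| Int.ModEq.pow_card_sub_one_eq_one hp <|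
      Nat.isCoprime_iff_coprime.mpr hap
  have hpB : ¬ (p : ℤ) ∣ ε * (a ^ (p - 1) + p * R) := by
    rw [(Int.isUnit_iff.mpr hε).dvd_mul_left, hB.dvd_iff, Int.natCast_dvd_ofNat]
    exact hp.not_dvd_one
  have hkey : (p : ℤ) ^ s * (2 ^ ((p - 1) / 2) * q ^ t) =
      p * (ε * (a ^ (p - 1) + p * R)) := by
    rw [hR] at heq
    linear_combination heq
  obtain rfl := eq_one_of_pow_mul_eq_mul hpZ (not_dvd_two_pow_mul_pow hp hq hp2 hpq _ t) hpB hkey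
  refine ⟨rfl, modEq_one_or_neg_one_of_two_pow_mul_eq hp2 hε hB ?_⟩
  exact mul_left_cancel₀ hpZ.ne_zero (by simpa [mul_assoc, mul_left_comm] using hkey)

theorem descent_d_eq_p
    (p q : ℕ) (hp : p.Prime) (hq : q.Prime) (hp3 : 3 < p) (hpq : p ≠ q)
    (a : ℕ) (ha : 0 < a) (hap : Nat.gcd a p = 1)
    (m₂ s t : ℕ) (ht : 1 ≤ t)
    (ε : ℤ) (hε : ε = 1 ∨ ε = -1)
    (heq : (2 : ℤ) ^ ((p - 1) / 2) * (p : ℤ) ^ s * (q : ℤ) ^ t =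
      ε * ∑ j ∈ Finset.range ((p - 1) / 2 + 1),
        (p.choose (2 * j + 1) : ℤ) * (a : ℤ) ^ (p - 1 - 2 * j) *
          (p : ℤ) ^ (2 * j * m₂) * (-(p : ℤ)) ^ j) :
    s = 1 ∧ ((q : ℤ) ^ t ≡ 1 [ZMOD p] ∨ (q : ℤ) ^ t ≡ -1 [ZMOD p]) :=
  descent_d_eq_p_general p q hp hq hp3 hpq a hap m₂ s t ε hε heq
end
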